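/- Let ∇ be a flat torsion-free connection on a real Lie algebra g and ψ : g → g* a linear isomorphism which is a g-module isomorphism from (g,∇) to (g*,∇*), i.e., ψ(∇_x y) = ∇*_x ψ(y) for all x,y. Then the 2-form ω on T_∇ g = g ⊕_∇ g defined by ω((x,y),(x',y')) = ψ(y)(x') - ψ(y')(x) is a symplectic structure: it is non-degenerate and closed with respect to the bracket of T_∇ g. -/

import Mathlib

/-!
Nondegeneracy of `ω` at `(x, y)`: pairing with `(x', 0)` forces `ψ y = 0`, and pairing with
`(0, y')` makes every functional (by surjectivity of `ψ`) vanish at `x`. Closedness: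
torsion-freeness writes each bracket `⁅x, y⁆` as `∇ₓy - ∇_y x`, and `ψ(∇ₓy) = -ψ(y) ∘ ∇ₓ` moves
every `∇` onto the other argument of `ψ`; after that the twelve terms of the cyclic sum cancel in
pairs.
-/

namespace TangentAlgebra

variable {R g : Type*}

/-- The bracket of `T_∇ g = g ⊕_∇ g`, with `D x` playing the role of `∇ₓ`. -/
def bracket [CommRing R] [LieRing g] [Module R g] (D : g →ₗ[R] Module.End R g) (a b : g × g) :
    g × g :=
  (⁅a.1, b.1⁆, D a.1 b.2 - D b.1 a.2)

def form [CommRing R] [AddCommGroup g] [Module R g] (ψ : g →ₗ[R] Module.Dual R g) (a b : g × g) :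
    R :=
  ψ a.2 b.1 - ψ b.2 a.1

theorem form_nondegenerate [CommRing R] [AddCommGroup g] [Module R g] [Module.Projective R g]
    {ψ : g →ₗ[R] Module.Dual R g} (hψ : Function.Bijective ψ) {p : g × g}
    (hp : ∀ q, form ψ p q = 0) : p = 0 := by
  have h₂ : p.2 = 0 := hψ.1 <| by
    rw [map_zero]
    ext x
    simpa [form] using hp (x, 0)
  have h₁ : p.1 = 0 := by
    rw [← Module.forall_dual_apply_eq_zero_iff R]
    intro φ
    obtain ⟨y, rfl⟩ := hψ.2 φ
    simpa [form] using hp (0, y)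
  exact Prod.ext h₁ h₂

theorem apply_connection_eq_neg [CommRing R] [AddCommGroup g] [Module R g]
    {D : g →ₗ[R] Module.End R g} {ψ : g →ₗ[R] Module.Dual R g}
    (hmod : ∀ x y, ψ (D x y) = -(ψ y).comp (D x)) (x y z : g) :
    ψ y (D x z) = -ψ (D x y) z := by
  simp [hmod]

section Closed

variable [CommRing R] [LieRing g] [LieAlgebra R g] {D : g →ₗ[R] Module.End R g}
  {ψ : g →ₗ[R] Module.Dual R g}

theorem apply_lie_eq (htf : ∀ x y, D x y - D y x = ⁅x, y⁆)
    (hmod : ∀ x y, ψ (D x y) = -(ψ y).comp (D x)) (x y z : g) :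
    ψ z ⁅x, y⁆ = ψ (D y z) x - ψ (D x z) y := by
  rw [← htf, map_sub, apply_connection_eq_neg hmod, apply_connection_eq_neg hmod]
  ring

theorem form_closed (htf : ∀ x y, D x y - D y x = ⁅x, y⁆)
    (hmod : ∀ x y, ψ (D x y) = -(ψ y).comp (D x)) (a b c : g × g) :
    form ψ a (bracket D b c) + form ψ b (bracket D c a) + form ψ c (bracket D a b) = 0 := by
  simp only [form, bracket, apply_lie_eq htf hmod, map_sub, LinearMap.sub_apply]
  ring

end Closed

end TangentAlgebra

open TangentAlgebra in
theorem stmt17_general {g : Type*} [LieRing g] [LieAlgebra ℝ g]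
    (D : g →ₗ[ℝ] Module.End ℝ g)
    (htf : ∀ x y : g, D x y - D y x = ⁅x, y⁆)
    (ψ : g →ₗ[ℝ] Module.Dual ℝ g) (hbij : Function.Bijective ψ)
    (hmod : ∀ x y : g, ψ (D x y) = -(ψ y).comp (D x)) :
    -- ω is non-degenerate:
    (∀ p : g × g, (∀ q : g × g, ψ p.2 q.1 - ψ q.2 p.1 = 0) → p = 0) ∧
    -- ω is closed:
    (∀ a b c : g × g,
      (ψ a.2 ⁅b.1, c.1⁆ - ψ (D b.1 c.2 - D c.1 b.2) a.1) +
        (ψ b.2 ⁅c.1, a.1⁆ - ψ (D c.1 a.2 - D a.1 c.2) b.1) +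
        (ψ c.2 ⁅a.1, b.1⁆ - ψ (D a.1 b.2 - D b.1 a.2) c.1) = 0) :=
  ⟨fun _ hp => form_nondegenerate hbij hp, form_closed htf hmod⟩

/-- If `∇` is a flat torsion-free connection on `g` and `ψ : (g,∇) → (g*,∇*)` a
`g`-module isomorphism (`ψ(∇ₓy) = ∇*ₓψ(y) = -ψ(y)∘∇ₓ`), then
`ω((x,y),(x',y')) = ψ(y)(x') - ψ(y')(x)` is a symplectic structure
(non-degenerate and closed) on the tangent algebra `T_∇ g`, whose bracket is
`[(x,u),(y,w)] = ([x,y], ∇ₓw - ∇_y u)`. -/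
theorem stmt17 {g : Type*} [LieRing g] [LieAlgebra ℝ g]
    (D : g →ₗ[ℝ] Module.End ℝ g) (hflat : ∀ x y : g, D ⁅x, y⁆ = ⁅D x, D y⁆)
    (htf : ∀ x y : g, D x y - D y x = ⁅x, y⁆)
    (ψ : g →ₗ[ℝ] Module.Dual ℝ g) (hbij : Function.Bijective ψ)
    (hmod : ∀ x y : g, ψ (D x y) = -(ψ y).comp (D x)) :
    -- ω is non-degenerate:
    (∀ p : g × g, (∀ q : g × g, ψ p.2 q.1 - ψ q.2 p.1 = 0) → p = 0) ∧
    -- ω is closed: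
    (∀ a b c : g × g,
      (ψ a.2 ⁅b.1, c.1⁆ - ψ (D b.1 c.2 - D c.1 b.2) a.1) +
        (ψ b.2 ⁅c.1, a.1⁆ - ψ (D c.1 a.2 - D a.1 c.2) b.1) +
        (ψ c.2 ⁅a.1, b.1⁆ - ψ (D a.1 b.2 - D b.1 a.2) c.1) = 0) :=
  stmt17_general D htf ψ hbij hmod
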